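/- arXiv:1309.2083 — 6 statements merged into one kernel-verified Lean document; each statement's English description precedes it below -/
import Mathlib

section
/- For all real numbers a > 0 and b > 0, the integral over (0,∞) of v^{1/2}·exp(−(π/2)·(a·v + b/v)) with respect to v equals √2·(1 + π·√(a·b))·exp(−π·√(a·b)) / (π·a^{3/2}). -/
/-!
After `v = u²` and `α²u² + β²/u² = (αu - β/u)² + 2αβ` the integral becomes
`2 e^{-2αβ} ∫₀^∞ u² e^{-(αu - β/u)²} du`. The Cauchy–Schlömilch substitution `t = αu - β/u` maps
`(0, ∞)` onto `ℝ` with `dt = (α + β/u²) du`, and the inversion `u ↦ (β/α)/u` changes the sign of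
`αu - β/u`. Adding `u² e^{-(αu - β/u)²}` to its transform under the inversion gives exactly
`(α + β/u²) ((αu - β/u)² + αβ) e^{-(αu - β/u)²} / α³`, so twice the integral is the Gaussian
moment `∫ (t² + αβ) e^{-t²} dt / α³ = √π (1 + 2αβ) / (2α³)`.
-/

open MeasureTheory Real Set

theorem integrable_sq_mul_exp_neg_sq : Integrable fun t : ℝ => t ^ 2 * exp (-t ^ 2) := by
  simpa using integrable_rpow_mul_exp_neg_mul_sq (b := 1) one_pos (s := 2) (by norm_num)

theorem integral_sq_mul_exp_neg_sq : ∫ t : ℝ, t ^ 2 * exp (-t ^ 2) = √π / 2 := by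
  have h := integral_rpow_mul_exp_neg_rpow (p := 2) (q := 2) two_pos (by norm_num)
  have hΓ : Gamma (3 / 2) = √π / 2 := by
    rw [show (3 / 2 : ℝ) = 1 / 2 + 1 by norm_num, Gamma_add_one (by norm_num), Gamma_one_half_eq]
    ring
  norm_num [hΓ] at h
  have h_even := integral_comp_abs (f := fun t : ℝ => t ^ 2 * exp (-t ^ 2))
  simp only [sq_abs] at h_even
  rw [h_even, h]
  ring

theorem hasDerivAt_mul_sub_div (α β : ℝ) {u : ℝ} (hu : u ≠ 0) :
    HasDerivAt (fun u => α * u - β / u) (α + β / u ^ 2) u := by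
  have h := ((hasDerivAt_id' u).const_mul α).sub ((hasDerivAt_inv hu).const_mul β)
  simp only [← div_eq_mul_inv, mul_one, mul_neg, sub_neg_eq_add] at h
  exact h

theorem hasDerivAt_const_div (κ : ℝ) {u : ℝ} (hu : u ≠ 0) :
    HasDerivAt (fun u => κ / u) (-(κ / u ^ 2)) u := by
  simpa only [← div_eq_mul_inv, mul_neg] using (hasDerivAt_inv hu).const_mul κ

section CauchySchlomilch

variable {E : Type*} [NormedAddCommGroup E] [NormedSpace ℝ E] {α β κ : ℝ}

theorem strictMonoOn_mul_sub_div (hα : 0 < α) (hβ : 0 ≤ β) :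
    StrictMonoOn (fun u => α * u - β / u) (Ioi 0) := by
  intro u (hu : 0 < u) v _ huv
  have : β / v ≤ β / u := div_le_div_of_nonneg_left hβ hu huv.le
  have : α * u < α * v := mul_lt_mul_of_pos_left huv hα
  simp only
  linarith

theorem image_mul_sub_div_Ioi (hα : 0 < α) (hβ : 0 < β) :
    (fun u => α * u - β / u) '' Ioi 0 = univ := by
  refine eq_univ_of_forall fun t => ?_
  set s := √(t ^ 2 + 4 * α * β)
  have hs : s ^ 2 = t ^ 2 + 4 * α * β := sq_sqrt (by positivity)
  have hts : 0 < t + s := by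
    have : |t| < s := by
      rw [← sqrt_sq_eq_abs]; exact sqrt_lt_sqrt (sq_nonneg t) (by nlinarith [mul_pos hα hβ])
    linarith [neg_abs_le t]
  refine ⟨(t + s) / (2 * α), div_pos hts (by positivity), ?_⟩
  field_simp
  linear_combination hs

theorem integral_comp_mul_sub_div (hα : 0 < α) (hβ : 0 < β) (F : ℝ → E) :
    ∫ u in Ioi 0, (α + β / u ^ 2) • F (α * u - β / u) = ∫ t, F t := by
  have h := integral_image_eq_integral_abs_deriv_smul measurableSet_Ioi
    (fun u (hu : 0 < u) => (hasDerivAt_mul_sub_div α β hu.ne').hasDerivWithinAt)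
    (strictMonoOn_mul_sub_div hα hβ.le).injOn F
  rw [image_mul_sub_div_Ioi hα hβ, Measure.restrict_univ] at h
  rw [h]
  refine setIntegral_congr_fun measurableSet_Ioi fun u (hu : 0 < u) => ?_
  rw [abs_of_pos (by positivity)]

theorem integrableOn_comp_mul_sub_div_iff (hα : 0 < α) (hβ : 0 < β) (F : ℝ → E) :
    IntegrableOn (fun u => (α + β / u ^ 2) • F (α * u - β / u)) (Ioi 0) ↔ Integrable F := by
  have h := integrableOn_image_iff_integrableOn_abs_deriv_smul measurableSet_Ioi
    (fun u (hu : 0 < u) => (hasDerivAt_mul_sub_div α β hu.ne').hasDerivWithinAt)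
    (strictMonoOn_mul_sub_div hα hβ.le).injOn F
  rw [image_mul_sub_div_Ioi hα hβ, integrableOn_univ] at h
  rw [h]
  refine integrableOn_congr_fun (fun u (hu : 0 < u) => ?_) measurableSet_Ioi
  rw [abs_of_pos (by positivity)]

theorem strictAntiOn_const_div_Ioi (hκ : 0 < κ) : StrictAntiOn (fun u => κ / u) (Ioi 0) :=
  fun _ hu _ _ huv => div_lt_div_of_pos_left hκ hu huv

theorem image_const_div_Ioi (hκ : 0 < κ) : (fun u => κ / u) '' Ioi 0 = Ioi 0 := by
  refine Subset.antisymm (image_subset_iff.2 fun u (hu : 0 < u) => div_pos hκ hu)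
    fun v (hv : 0 < v) => ⟨κ / v, div_pos hκ hv, div_div_cancel₀ hκ.ne'⟩

theorem integral_comp_div_Ioi (hκ : 0 < κ) (g : ℝ → E) :
    ∫ u in Ioi 0, (κ / u ^ 2) • g (κ / u) = ∫ u in Ioi 0, g u := by
  have h := integral_image_eq_integral_abs_deriv_smul measurableSet_Ioi
    (fun u (hu : 0 < u) => (hasDerivAt_const_div κ hu.ne').hasDerivWithinAt)
    (strictAntiOn_const_div_Ioi hκ).injOn g
  rw [image_const_div_Ioi hκ] at h
  rw [h]
  refine setIntegral_congr_fun measurableSet_Ioi fun u (hu : 0 < u) => ?_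
  rw [abs_neg, abs_of_pos (by positivity)]

theorem integrableOn_comp_div_Ioi_iff (hκ : 0 < κ) (g : ℝ → E) :
    IntegrableOn (fun u => (κ / u ^ 2) • g (κ / u)) (Ioi 0) ↔ IntegrableOn g (Ioi 0) := by
  have h := integrableOn_image_iff_integrableOn_abs_deriv_smul measurableSet_Ioi
    (fun u (hu : 0 < u) => (hasDerivAt_const_div κ hu.ne').hasDerivWithinAt)
    (strictAntiOn_const_div_Ioi hκ).injOn g
  rw [image_const_div_Ioi hκ] at h
  rw [h]
  refine integrableOn_congr_fun (fun u (hu : 0 < u) => ?_) measurableSet_Ioi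
  rw [abs_neg, abs_of_pos (by positivity)]

theorem integral_Ioi_eq_half_integral_of_add_comp_div (hα : 0 < α) (hβ : 0 < β) (hκ : 0 < κ)
    {g F : ℝ → ℝ} (hg : IntegrableOn g (Ioi 0))
    (hgF : ∀ u > 0, g u + κ / u ^ 2 * g (κ / u) = (α + β / u ^ 2) * F (α * u - β / u)) :
    ∫ u in Ioi 0, g u = (∫ t, F t) / 2 := by
  have hg' := (integrableOn_comp_div_Ioi_iff hκ g).2 hg
  have hinv := integral_comp_div_Ioi hκ g
  simp only [smul_eq_mul] at hg' hinv
  rw [← integral_comp_mul_sub_div hα hβ]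
  simp only [smul_eq_mul]
  rw [← setIntegral_congr_fun measurableSet_Ioi hgF, integral_add hg hg', hinv]
  ring

theorem integral_sq_mul_exp_neg_sq_mul_sub_div (hα : 0 < α) (hβ : 0 < β) :
    ∫ u in Ioi 0, u ^ 2 * exp (-(α * u - β / u) ^ 2) = √π * (1 + 2 * α * β) / (4 * α ^ 3) := by
  set F : ℝ → ℝ := fun t => (t ^ 2 * exp (-t ^ 2) + α * β * exp (-t ^ 2)) / α ^ 3
  have hgauss : Integrable fun t : ℝ => exp (-t ^ 2) := by
    simpa using integrable_exp_neg_mul_sq one_pos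
  have hF : Integrable F :=
    (integrable_sq_mul_exp_neg_sq.add (hgauss.const_mul _)).div_const _
  have hF_integral : ∫ t, F t = √π * (1 + 2 * α * β) / (2 * α ^ 3) := by
    rw [integral_div, integral_add integrable_sq_mul_exp_neg_sq (hgauss.const_mul _),
      integral_const_mul, integral_sq_mul_exp_neg_sq, show ∫ t : ℝ, exp (-t ^ 2) = √π by
        simpa using integral_gaussian 1]
    ring
  have hgF : ∀ u > 0, u ^ 2 * exp (-(α * u - β / u) ^ 2)
      + β / α / u ^ 2 * ((β / α / u) ^ 2 * exp (-(α * (β / α / u) - β / (β / α / u)) ^ 2))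
      = (α + β / u ^ 2) * F (α * u - β / u) := by
    intro u hu
    have hsymm : α * (β / α / u) - β / (β / α / u) = -(α * u - β / u) := by
      field_simp; ring
    rw [hsymm, neg_sq]
    simp only [F]
    field_simp
    ring
  have hg : IntegrableOn (fun u => u ^ 2 * exp (-(α * u - β / u) ^ 2)) (Ioi 0) := by
    refine Integrable.mono' ((integrableOn_comp_mul_sub_div_iff hα hβ F).2 hF)
      (by fun_prop) ((ae_restrict_iff' measurableSet_Ioi).2 (ae_of_all _ fun u hu => ?_))
    rw [Real.norm_of_nonneg (by positivity), smul_eq_mul, ← hgF u hu]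
    exact le_add_of_nonneg_right (by positivity)
  rw [integral_Ioi_eq_half_integral_of_add_comp_div hα hβ (div_pos hβ hα) hg hgF, hF_integral]
  ring

theorem integral_rpow_one_half_mul_exp_neg_sq_mul_add_sq_div (hα : 0 < α) (hβ : 0 < β) :
    ∫ v in Ioi 0, v ^ (1 / 2 : ℝ) * exp (-(α ^ 2 * v + β ^ 2 / v))
      = √π * (1 + 2 * α * β) * exp (-(2 * α * β)) / (2 * α ^ 3) := by
  rw [← integral_comp_rpow_Ioi_of_pos two_pos]
  have h_sq : ∀ u > (0 : ℝ), (2 * u ^ ((2 : ℝ) - 1)) •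
      ((u ^ (2 : ℝ)) ^ (1 / 2 : ℝ) * exp (-(α ^ 2 * u ^ (2 : ℝ) + β ^ 2 / u ^ (2 : ℝ))))
      = 2 * exp (-(2 * α * β)) * (u ^ 2 * exp (-(α * u - β / u) ^ 2)) := by
    intro u hu
    have h_exponent : -(α ^ 2 * u ^ 2 + β ^ 2 / u ^ 2) = -(α * u - β / u) ^ 2 + -(2 * α * β) := by
      field_simp; ring
    rw [rpow_two, ← sqrt_eq_rpow, sqrt_sq hu.le, show (2 : ℝ) - 1 = 1 by norm_num, rpow_one,
      smul_eq_mul, h_exponent, exp_add]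
    ring
  rw [setIntegral_congr_fun measurableSet_Ioi h_sq, integral_const_mul,
    integral_sq_mul_exp_neg_sq_mul_sub_div hα hβ]
  field_simp
  ring

end CauchySchlomilch

/-- Equation (bessK+1/2): the weight `+1/2` Bessel-type integral. -/
theorem bessel_integral_pos_one_half (a b : ℝ) (ha : 0 < a) (hb : 0 < b) :
    (∫ v in Set.Ioi (0 : ℝ), v ^ ((1 : ℝ) / 2) * Real.exp (-(π / 2) * (a * v + b / v)))
      = Real.sqrt 2 * (1 + π * Real.sqrt (a * b)) * Real.exp (-π * Real.sqrt (a * b))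
          / (π * a ^ ((3 : ℝ) / 2)) := by
  set α := √(π * a / 2) with hα_def
  set β := √(π * b / 2)
  have hα : α ^ 2 = π * a / 2 := sq_sqrt (by positivity)
  have hβ : β ^ 2 = π * b / 2 := sq_sqrt (by positivity)
  have hαβ : 2 * α * β = π * √(a * b) := by
    rw [mul_assoc, ← sqrt_mul (by positivity),
      show π * a / 2 * (π * b / 2) = (π / 2) ^ 2 * (a * b) by ring, sqrt_mul (by positivity),
      sqrt_sq (by positivity)]
    ring
  have hα_eq : α = √π * √a / √2 := by
    rw [hα_def, sqrt_div (by positivity), sqrt_mul pi_pos.le]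
  have ha_rpow : a ^ ((3 : ℝ) / 2) = a * √a := by
    rw [show (3 : ℝ) / 2 = 1 + 1 / 2 by norm_num, rpow_add ha, rpow_one, ← sqrt_eq_rpow]
  calc (∫ v in Ioi 0, v ^ ((1 : ℝ) / 2) * exp (-(π / 2) * (a * v + b / v)))
      = ∫ v in Ioi 0, v ^ (1 / 2 : ℝ) * exp (-(α ^ 2 * v + β ^ 2 / v)) := by
        simp only [hα, hβ]; ring_nf
    _ = √π * (1 + 2 * α * β) * exp (-(2 * α * β)) / (2 * α ^ 3) :=
        integral_rpow_one_half_mul_exp_neg_sq_mul_add_sq_div (by positivity) (by positivity)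
    _ = _ := by
        rw [hαβ, ha_rpow, neg_mul, pow_succ, hα, hα_eq]
        field_simp
end

section
/- For every real number c > 0, the integral over (1,∞) of 2·(1 − 1/s)·exp(−c·s)·s/(s+1) with respect to s equals (2/c)·exp(−c) − 4·exp(c)·∫_1^∞ exp(−2·c·s)/s ds. -/
/-! Split the integrand as `2 e^{-cs} - 4 e^{-cs}/(s+1)`. The first part integrates to `2 e^{-c}/c`;
the substitution `s + 1 = 2t` turns the second into `e^c ∫_1^∞ e^{-2ct}/t dt`. -/

open MeasureTheory Real Set

theorem integral_comp_add_right_Ioi {E : Type*} [NormedAddCommGroup E] [NormedSpace ℝ E]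
    (g : ℝ → E) (a b : ℝ) : ∫ x in Ioi a, g (x + b) = ∫ x in Ioi (a + b), g x := by
  have := (measurePreserving_add_right volume b).setIntegral_preimage_emb
    (measurableEmbedding_addRight b) g (Ioi (a + b))
  simpa [preimage_add_const_Ioi] using this

theorem integrableOn_Ioi_exp_neg_mul_div_add {a b c : ℝ} (hc : 0 < c) (hab : 0 < a + b) :
    IntegrableOn (fun s => exp (-c * s) / (s + b)) (Ioi a) := by
  refine ((exp_neg_integrableOn_Ioi a hc).const_mul (a + b)⁻¹).mono' ?_ ?_
  · exact Measurable.aestronglyMeasurable (by fun_prop)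
  · filter_upwards [ae_restrict_mem measurableSet_Ioi] with s (hs : a < s)
    rw [norm_div, Real.norm_of_nonneg (exp_pos _).le, Real.norm_of_nonneg (by linarith),
      div_eq_inv_mul, neg_mul]
    gcongr

theorem integral_Ioi_exp_neg_mul {c : ℝ} (hc : 0 < c) (a : ℝ) :
    ∫ s in Ioi a, exp (-c * s) = exp (-c * a) / c := by
  rw [integral_exp_mul_Ioi (neg_neg_iff_pos.mpr hc), div_neg, neg_div, neg_neg]

theorem integral_Ioi_one_exp_neg_mul_div_add_one (c : ℝ) :
    ∫ s in Ioi (1 : ℝ), exp (-c * s) / (s + 1)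
      = exp c * ∫ t in Ioi (1 : ℝ), exp (-(2 * c) * t) / t := by
  set f : ℝ → ℝ := fun u => exp (-c * (u - 1)) / u
  calc ∫ s in Ioi (1 : ℝ), exp (-c * s) / (s + 1)
      = ∫ s in Ioi (1 : ℝ), f (s + 1) := by simp [f]
    _ = ∫ u in Ioi (2 : ℝ), f u := by rw [integral_comp_add_right_Ioi]; norm_num
    _ = 2 * ∫ t in Ioi (1 : ℝ), f (2 * t) := by
      rw [← smul_eq_mul, integral_comp_mul_left_Ioi' f 1 two_pos, mul_one]
    _ = exp c * ∫ t in Ioi (1 : ℝ), exp (-(2 * c) * t) / t := by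
      rw [← integral_const_mul, ← integral_const_mul]
      refine setIntegral_congr_fun measurableSet_Ioi fun t (ht : 1 < t) => ?_
      have ht0 : t ≠ 0 := by positivity
      simp only [f]
      rw [show -c * (2 * t - 1) = c + -(2 * c) * t by ring, exp_add]
      field_simp

/-- Equation (IoEllNegEqn): the archimedean integral `I^o(ℓ,η)` for `ℓ < 0`. -/
theorem Io_integral_neg (c : ℝ) (hc : 0 < c) :
    (∫ s in Set.Ioi (1 : ℝ), 2 * (1 - 1 / s) * Real.exp (-c * s) * s / (s + 1))
      = (2 / c) * Real.exp (-c)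
        - 4 * Real.exp c * ∫ s in Set.Ioi (1 : ℝ), Real.exp (-(2 * c) * s) / s := by
  have integrand_eq : ∀ s ∈ Ioi (1 : ℝ), 2 * (1 - 1 / s) * exp (-c * s) * s / (s + 1)
      = 2 * exp (-c * s) - 4 * (exp (-c * s) / (s + 1)) := fun s (hs : 1 < s) => by
    have : s + 1 ≠ 0 := by positivity
    field_simp
    ring
  rw [setIntegral_congr_fun measurableSet_Ioi integrand_eq,
    integral_sub ((exp_neg_integrableOn_Ioi 1 hc).const_mul 2)
      ((integrableOn_Ioi_exp_neg_mul_div_add hc (by norm_num)).const_mul 4),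
    integral_const_mul, integral_const_mul, integral_Ioi_exp_neg_mul hc,
    integral_Ioi_one_exp_neg_mul_div_add_one]
  rw [mul_one]
  ring
end

section
/- For every real number a > 0, the iterated integral 4·∫_1^∞ (1/s)·( ∫_0^1 exp(−a·s·r²/(1−r²))·r/(1−r²)² dr ) ds equals 2/a. -/
open MeasureTheory Real Set

/-! The substitution `x = r² / (1 - r²)` maps `(0, 1)` onto `(0, ∞)` with `dx = 2r / (1 - r²)² dr`,
so the inner integral is `∫₀^∞ e^{-a s x} dx / 2 = 1 / (2 a s)`; the outer integral is then
`∫₁^∞ s⁻² ds / (2a) = 1 / (2a)`. -/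

lemma integral_exp_neg_mul_Ioi_zero {c : ℝ} (hc : 0 < c) :
    ∫ x in Ioi (0 : ℝ), exp (-c * x) = 1 / c := by
  rw [integral_exp_mul_Ioi (neg_neg_of_pos hc) 0]
  simp [neg_div_neg_eq]

lemma one_sub_sq_pos_of_mem_Ioo {r : ℝ} (hr : r ∈ Ioo (0 : ℝ) 1) : 0 < 1 - r ^ 2 := by
  nlinarith [hr.1, hr.2]

lemma hasDerivAt_sq_div_one_sub_sq {r : ℝ} (hr : 1 - r ^ 2 ≠ 0) :
    HasDerivAt (fun r : ℝ => r ^ 2 / (1 - r ^ 2)) (2 * r / (1 - r ^ 2) ^ 2) r := by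
  have hnum : HasDerivAt (fun r : ℝ => r ^ 2) (2 * r) r := by
    simpa using hasDerivAt_pow 2 r
  refine (hnum.div (hnum.const_sub 1) hr).congr_deriv ?_
  ring

lemma strictMonoOn_sq_div_one_sub_sq :
    StrictMonoOn (fun r : ℝ => r ^ 2 / (1 - r ^ 2)) (Ioo 0 1) := by
  intro r hr t ht hrt
  have hsq : r ^ 2 < t ^ 2 := by nlinarith [hr.1]
  rw [div_lt_div_iff₀ (one_sub_sq_pos_of_mem_Ioo hr) (one_sub_sq_pos_of_mem_Ioo ht)]
  nlinarith

lemma image_sq_div_one_sub_sq_Ioo :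
    (fun r : ℝ => r ^ 2 / (1 - r ^ 2)) '' Ioo 0 1 = Ioi 0 := by
  ext x
  constructor
  · rintro ⟨r, hr, rfl⟩
    exact div_pos (pow_pos hr.1 2) (one_sub_sq_pos_of_mem_Ioo hr)
  · intro hx
    have hx : 0 < x := hx
    refine ⟨√(x / (1 + x)), ⟨by positivity, ?_⟩, ?_⟩
    · rw [sqrt_lt' one_pos, one_pow, div_lt_one (by positivity)]
      linarith
    · dsimp only
      rw [sq_sqrt (by positivity)]
      field_simp
      ring

lemma integral_comp_sq_div_one_sub_sq {E : Type*} [NormedAddCommGroup E] [NormedSpace ℝ E]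
    (g : ℝ → E) :
    ∫ r in Ioo (0 : ℝ) 1, (2 * r / (1 - r ^ 2) ^ 2) • g (r ^ 2 / (1 - r ^ 2))
      = ∫ x in Ioi (0 : ℝ), g x := by
  have hderiv : ∀ r ∈ Ioo (0 : ℝ) 1, HasDerivWithinAt (fun r : ℝ => r ^ 2 / (1 - r ^ 2))
      (2 * r / (1 - r ^ 2) ^ 2) (Ioo 0 1) r := fun r hr =>
    (hasDerivAt_sq_div_one_sub_sq (one_sub_sq_pos_of_mem_Ioo hr).ne').hasDerivWithinAt
  rw [← image_sq_div_one_sub_sq_Ioo, integral_image_eq_integral_abs_deriv_smul measurableSet_Ioo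
    hderiv strictMonoOn_sq_div_one_sub_sq.injOn]
  refine setIntegral_congr_fun measurableSet_Ioo fun r hr => ?_
  have hr0 := hr.1
  have hr1 := one_sub_sq_pos_of_mem_Ioo hr
  rw [abs_of_pos (by positivity)]

lemma integral_exp_neg_mul_sq_div_one_sub_sq {c : ℝ} (hc : 0 < c) :
    ∫ r in Ioo (0 : ℝ) 1, exp (-c * r ^ 2 / (1 - r ^ 2)) * r / (1 - r ^ 2) ^ 2 = 1 / (2 * c) := by
  have h := integral_comp_sq_div_one_sub_sq fun x => exp (-c * x)
  rw [integral_exp_neg_mul_Ioi_zero hc] at h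
  rw [mul_comm, ← div_div, ← h, ← integral_div]
  refine setIntegral_congr_fun measurableSet_Ioo fun r _ => ?_
  simp only [smul_eq_mul, mul_div_assoc]
  ring

/-- The iterated integral evaluating `I_φ(y,η)` for `y` of positive hermitian norm. -/
theorem Iphi_iterated_pos (a : ℝ) (ha : 0 < a) :
    4 * (∫ s in Set.Ioi (1 : ℝ), (1 / s) *
        ∫ r in Set.Ioo (0 : ℝ) 1, Real.exp (-a * s * r ^ 2 / (1 - r ^ 2)) * r / (1 - r ^ 2) ^ 2)
      = 2 / a := by
  have inner : ∀ s ∈ Ioi (1 : ℝ), (1 / s) *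
      ∫ r in Ioo (0 : ℝ) 1, exp (-a * s * r ^ 2 / (1 - r ^ 2)) * r / (1 - r ^ 2) ^ 2
        = 1 / (2 * a) * s ^ (-2 : ℝ) := by
    intro s hs
    have hs : 0 < s := one_pos.trans hs
    have h := integral_exp_neg_mul_sq_div_one_sub_sq (mul_pos ha hs)
    rw [← neg_mul] at h
    rw [h, rpow_neg hs.le, rpow_two]
    field_simp
  rw [setIntegral_congr_fun measurableSet_Ioi inner, integral_const_mul,
    integral_Ioi_rpow_of_lt (by norm_num) one_pos]
  field_simp
  norm_num
end

section
/- For every real number a > 0, the iterated integral 4·∫_1^∞ (1/s)·( ∫_0^1 exp(−a·s/(1−r²))·r/(1−r²)² dr ) ds equals (2/a)·exp(−a) − 2·∫_1^∞ exp(−a·s)/s ds. -/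
open MeasureTheory Real Filter Set Topology Function

/-! The inner integrand is the derivative of `r ↦ -exp (-c / (1 - r²)) / (2c)` (this is the
substitution `u = 1 / (1 - r²)`), so with `c = a s` the inner integral is `exp (-a s) / (2 a s)`
and the left-hand side becomes `(2 / a) ∫₁^∞ exp (-a s) / s² ds`. Integrating by parts against
`d(-1/s)` turns this into `(2 / a) exp (-a) - 2 ∫₁^∞ exp (-a s) / s ds`. -/

theorem integral_Ioo_of_hasDerivAt_of_nonneg_of_tendsto {f f' : ℝ → ℝ} {a b fa fb : ℝ}
    (hab : a < b) (hderiv : ∀ x ∈ Ioo a b, HasDerivAt f (f' x) x)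
    (hpos : ∀ x ∈ Ioo a b, 0 ≤ f' x)
    (ha : Tendsto f (𝓝[>] a) (𝓝 fa)) (hb : Tendsto f (𝓝[<] b) (𝓝 fb)) :
    ∫ x in Ioo a b, f' x = fb - fa := by
  -- Redefining `f` at the endpoints makes it continuous on `[a, b]`, so a nonnegative derivative
  -- is integrable.
  set F : ℝ → ℝ := update (update f a fa) b fb
  have hF_eq : EqOn F f (Ioo a b) := fun x hx => by
    simp only [F, update_of_ne hx.2.ne, update_of_ne hx.1.ne']
  have hF_cont : ContinuousOn F (Icc a b) := by
    rw [continuousOn_update_iff, continuousOn_update_iff, Icc_sdiff_right, Ico_sdiff_left]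
    refine ⟨⟨fun z hz => (hderiv z hz).continuousAt.continuousWithinAt, fun _ => ?_⟩, fun _ => ?_⟩
    · exact ha.mono_left (nhdsWithin_mono _ Ioo_subset_Ioi_self)
    · refine (hb.congr' ?_).mono_left (nhdsWithin_mono _ Ico_subset_Iio_self)
      filter_upwards [Ioo_mem_nhdsLT hab] with x hx using (update_of_ne hx.1.ne' _ _).symm
  have hint : IntegrableOn f' (Ioc a b) :=
    intervalIntegral.integrableOn_deriv_of_nonneg hF_cont
      (fun x hx => (hderiv x hx).congr_of_eventuallyEq
        (eventually_of_mem (Ioo_mem_nhds hx.1 hx.2) hF_eq)) hpos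
  rw [← integral_Ioc_eq_integral_Ioo, ← intervalIntegral.integral_of_le hab.le]
  exact intervalIntegral.integral_eq_sub_of_hasDerivAt_of_tendsto hab hderiv
    ((intervalIntegrable_iff_integrableOn_Ioc_of_le hab.le).mpr hint) ha hb

lemma hasDerivAt_exp_neg_div_one_sub_sq {c r : ℝ} (hc : c ≠ 0) (hr : 1 - r ^ 2 ≠ 0) :
    HasDerivAt (fun r => -(exp (-c / (1 - r ^ 2)) / (2 * c)))
      (exp (-c / (1 - r ^ 2)) * r / (1 - r ^ 2) ^ 2) r := by
  refine ((((hasDerivAt_const r (-c)).div ((hasDerivAt_pow 2 r).const_sub 1) hr).exp.div_const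
    (2 * c)).neg).congr_deriv ?_
  simp only [Pi.div_apply]
  field_simp
  ring

lemma tendsto_one_sub_sq_nhdsLT_one : Tendsto (fun r : ℝ => 1 - r ^ 2) (𝓝[<] 1) (𝓝[>] 0) := by
  refine tendsto_nhdsWithin_of_tendsto_nhds_of_eventually_within _ ?_ ?_
  · have h : Tendsto (fun r : ℝ => 1 - r ^ 2) (𝓝 1) (𝓝 (1 - 1 ^ 2)) :=
      (continuous_const.sub (continuous_pow 2)).tendsto 1
    simpa using h.mono_left nhdsWithin_le_nhds
  · filter_upwards [Ioo_mem_nhdsLT (zero_lt_one' ℝ)] with r hr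
    simp only [mem_Ioi, sub_pos]
    nlinarith [hr.1, hr.2]

lemma integral_exp_neg_div_one_sub_sq {c : ℝ} (hc : 0 < c) :
    ∫ r in Ioo (0 : ℝ) 1, exp (-c / (1 - r ^ 2)) * r / (1 - r ^ 2) ^ 2 = exp (-c) / (2 * c) := by
  have hsq : ∀ r ∈ Ioo (0 : ℝ) 1, 1 - r ^ 2 ≠ 0 := fun r hr => by nlinarith [hr.1, hr.2]
  have h_at_zero : Tendsto (fun r => -(exp (-c / (1 - r ^ 2)) / (2 * c))) (𝓝[>] 0)
      (𝓝 (-(exp (-c) / (2 * c)))) := by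
    have h : ContinuousAt (fun r => -(exp (-c / (1 - r ^ 2)) / (2 * c))) 0 := by
      fun_prop (disch := norm_num)
    simpa using h.tendsto.mono_left nhdsWithin_le_nhds
  have h_at_one : Tendsto (fun r => -(exp (-c / (1 - r ^ 2)) / (2 * c))) (𝓝[<] 1) (𝓝 0) := by
    have h : Tendsto (fun r => c / (1 - r ^ 2)) (𝓝[<] 1) atTop :=
      (tendsto_inv_nhdsGT_zero.const_mul_atTop hc).comp tendsto_one_sub_sq_nhdsLT_one
    simpa [neg_div] using ((tendsto_exp_atBot.comp (tendsto_neg_atTop_atBot.comp h)).div_const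
      (2 * c)).neg
  rw [integral_Ioo_of_hasDerivAt_of_nonneg_of_tendsto zero_lt_one
    (fun r hr => hasDerivAt_exp_neg_div_one_sub_sq hc.ne' (hsq r hr))
    (fun r hr => by have := hr.1; positivity) h_at_zero h_at_one]
  ring

lemma integrableOn_exp_neg_mul_div_pow {a : ℝ} (ha : 0 < a) (n : ℕ) :
    IntegrableOn (fun s => exp (-a * s) / s ^ n) (Ioi 1) := by
  refine (exp_neg_integrableOn_Ioi 1 ha).mono'
    (by fun_prop : Measurable _).aestronglyMeasurable ?_
  filter_upwards [self_mem_ae_restrict measurableSet_Ioi] with s (hs : 1 < s)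
  rw [norm_of_nonneg (by positivity)]
  exact div_le_self (exp_pos _).le (one_le_pow₀ hs.le)

lemma integral_exp_neg_mul_div_sq {a : ℝ} (ha : 0 < a) :
    ∫ s in Ioi 1, exp (-a * s) / s ^ 2 = exp (-a) - a * ∫ s in Ioi 1, exp (-a * s) / s := by
  have hderiv : ∀ s ∈ Ici (1 : ℝ), HasDerivAt (fun s => -(exp (-a * s) / s))
      (exp (-a * s) / s ^ 2 + a * (exp (-a * s) / s)) s := fun s (hs : 1 ≤ s) => by
    refine ((((hasDerivAt_id s).const_mul (-a)).exp.div (hasDerivAt_id s)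
      (by positivity)).neg).congr_deriv ?_
    simp only [id]
    field_simp
    ring
  have hlim : Tendsto (fun s => -(exp (-a * s) / s)) atTop (𝓝 0) := by
    simpa using ((tendsto_exp_atBot.comp
      (tendsto_id.const_mul_atTop_of_neg (neg_neg_of_pos ha))).div_atTop tendsto_id).neg
  have hint₁ : IntegrableOn (fun s => exp (-a * s) / s) (Ioi 1) := by
    simpa using integrableOn_exp_neg_mul_div_pow ha 1
  have hint₂ := integrableOn_exp_neg_mul_div_pow ha 2
  have h := integral_Ioi_of_hasDerivAt_of_tendsto' hderiv (hint₂.add (hint₁.const_mul a)) hlim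
  rw [integral_add hint₂ (hint₁.const_mul a), integral_const_mul] at h
  simp only [mul_one, div_one, sub_neg_eq_add, zero_add] at h
  linarith

/-- The iterated integral evaluating `I_φ(y,η)` for `y` of negative hermitian norm. -/
theorem Iphi_iterated_neg (a : ℝ) (ha : 0 < a) :
    4 * (∫ s in Set.Ioi (1 : ℝ), (1 / s) *
        ∫ r in Set.Ioo (0 : ℝ) 1, Real.exp (-a * s / (1 - r ^ 2)) * r / (1 - r ^ 2) ^ 2)
      = (2 / a) * Real.exp (-a) - 2 * ∫ s in Set.Ioi (1 : ℝ), Real.exp (-a * s) / s := by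
  have h_inner : EqOn
      (fun s => (1 / s) * ∫ r in Ioo (0 : ℝ) 1, exp (-a * s / (1 - r ^ 2)) * r / (1 - r ^ 2) ^ 2)
      (fun s => (2 * a)⁻¹ * (exp (-a * s) / s ^ 2)) (Ioi 1) := fun s (hs : 1 < s) => by
    have hs₀ : 0 < s := zero_lt_one.trans hs
    simp only [neg_mul, integral_exp_neg_div_one_sub_sq (mul_pos ha hs₀)]
    field_simp
  rw [setIntegral_congr_fun measurableSet_Ioi h_inner, integral_const_mul,
    integral_exp_neg_mul_div_sq ha]
  field_simp
  ring
end

section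
/- Let k = ℚ(√Δ) be an imaginary quadratic field with Δ < 0 a squarefree integer, and let O_k be its ring of integers. Suppose χ : ℕ → ℤ is completely multiplicative (χ(1) = 1 and χ(m·n) = χ(m)·χ(n) for all m, n) and satisfies, for every prime p: χ(p) = 1 if p is split in k, χ(p) = 0 if p is ramified in k, and χ(p) = −1 if p is inert in k. Then for every integer N ≥ 1, the number of nonzero ideals of O_k of absolute norm N equals the sum of χ(a) over the positive divisors a of N. -/
/-!
Both sides are multiplicative in `N`. For the ideal count this is because an ideal `I` of norm
`m * n`, with `m` and `n` coprime, factors uniquely as `(I + (m)) * (I + (n))` into ideals of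
norms `m` and `n`. An ideal of norm `p ^ e` divides `(p) ^ e`, so it is a product of primes above
`p`. Since `(p)` has norm `p ^ 2`, it is prime (inert), `P ^ 2` (ramified) or `P * Q` with `P ≠ Q`
(split), `P` and `Q` of norm `p`, and the number of ideals of norm `p ^ e` is `[2 ∣ e]`, `1` or
`e + 1` respectively, which is `∑_{i ≤ e} χ(p) ^ i` in each case.
-/

open NumberField Ideal ArithmeticFunction Finset Polynomial
open scoped ArithmeticFunction.zeta

namespace ArithmeticFunction

variable {R : Type*} [CommSemiring R]

theorem isMultiplicative_toArithmeticFunction_monoidHom (χ : ℕ →* R) :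
    (toArithmeticFunction χ).IsMultiplicative := by
  refine IsMultiplicative.iff_ne_zero.mpr ⟨?_, fun {m n} hm hn _ => ?_⟩
  · simp [toArithmeticFunction]
  · simp [toArithmeticFunction, hm, hn]

theorem IsMultiplicative.eq_sum_divisors_of_prime_pow {f : ArithmeticFunction R}
    (hf : f.IsMultiplicative) (χ : ℕ →* R)
    (h : ∀ p e : ℕ, p.Prime → f (p ^ e) = ∑ i ∈ range (e + 1), χ p ^ i) (N : ℕ) :
    f N = ∑ a ∈ N.divisors, χ a := by
  have hζ : f = toArithmeticFunction χ * ζ := by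
    refine (hf.eq_iff_eq_on_prime_powers _ _
      ((isMultiplicative_toArithmeticFunction_monoidHom χ).mul isMultiplicative_zeta.natCast)).mpr
      fun p e hp => ?_
    rw [h p e hp, coe_mul_zeta_apply, Nat.sum_divisors_prime_pow hp]
    refine sum_congr rfl fun i _ => ?_
    rw [toArithmeticFunction, coe_mk, if_neg (pow_ne_zero i hp.ne_zero), map_pow]
  rw [hζ, coe_mul_zeta_apply]
  exact sum_congr rfl fun a ha => if_neg (Nat.pos_of_mem_divisors ha).ne'

end ArithmeticFunction

theorem finrank_eq_two_of_sq_eq {F K : Type*} [Field F] [Field K] [Algebra F K] {a : F}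
    (ha : ∀ b : F, b ^ 2 ≠ a) {α : K} (hα : α ^ 2 = algebraMap F K a)
    (hgen : Algebra.adjoin F {α} = ⊤) : Module.finrank F K = 2 := by
  have hirr : Irreducible (X ^ 2 - C a) := X_pow_sub_C_irreducible_of_prime Nat.prime_two ha
  have hmonic : (X ^ 2 - C a).Monic := monic_X_pow_sub_C a two_ne_zero
  have hroot : aeval α (X ^ 2 - C a) = 0 := by simp [hα]
  have hint : IsIntegral F α := ⟨_, hmonic, hroot⟩
  rw [← IntermediateField.finrank_top',
    ← (IntermediateField.adjoin_simple_eq_top_iff_of_isAlgebraic hint.isAlgebraic).mpr hgen,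
    IntermediateField.adjoin.finrank hint, ← minpoly.eq_of_irreducible_of_monic hirr hroot hmonic,
    natDegree_X_pow_sub_C]

namespace Ideal

section CommRing

variable {R : Type*} [CommRing R]

theorem mul_sup_span_singleton_eq {A B : Ideal R} {a b : R} (hab : IsCoprime a b)
    (ha : a ∈ A) (hb : b ∈ B) : A * B ⊔ span {a} = A := by
  refine le_antisymm (sup_le mul_le_left ((span_singleton_le_iff_mem _).mpr ha)) fun x hx => ?_
  obtain ⟨u, v, huv⟩ := hab
  have hx_eq : x = u * x * a + v * (x * b) := by linear_combination -x * huv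
  rw [hx_eq]
  exact add_mem (mem_sup_right (mul_mem_left _ _ (mem_span_singleton_self a)))
    (mem_sup_left (mul_mem_left _ _ (mul_mem_mul hx hb)))

theorem sup_span_singleton_mul_sup_span_singleton {I : Ideal R} {a b : R}
    (hab : IsCoprime a b) (h : a * b ∈ I) : (I ⊔ span {a}) * (I ⊔ span {b}) = I := by
  refine le_antisymm ?_ fun x hx => ?_
  · rw [sup_mul, mul_sup, mul_sup, span_singleton_mul_span_singleton]
    exact sup_le (sup_le mul_le_right mul_le_left)
      (sup_le mul_le_right ((span_singleton_le_iff_mem _).mpr h))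
  · obtain ⟨u, v, huv⟩ := hab
    have hx_eq : x = u * (a * x) + v * (x * b) := by linear_combination -x * huv
    rw [hx_eq]
    exact add_mem
      (mul_mem_left _ _ (mul_mem_mul (mem_sup_right (mem_span_singleton_self a)) (mem_sup_left hx)))
      (mul_mem_left _ _ (mul_mem_mul (mem_sup_left hx) (mem_sup_right (mem_span_singleton_self b))))

end CommRing

variable {S : Type*} [CommRing S] [IsDedekindDomain S] [Module.Free ℤ S]

theorem prime_of_absNorm_eq_prime {P : Ideal S} {p : ℕ} (hp : p.Prime) (hP : absNorm P = p) :
    Prime P :=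
  UniqueFactorizationMonoid.irreducible_iff_prime.mp
    (irreducible_of_irreducible_absNorm (hP ▸ hp))

theorem dvd_span_natCast_pow_of_absNorm_eq {I : Ideal S} {p e : ℕ} (h : absNorm I = p ^ e) :
    I ∣ span {(p : S)} ^ e := by
  rw [span_singleton_pow, dvd_span_singleton, ← Nat.cast_pow, ← h]
  exact absNorm_mem I

theorem isPrime_or_exists_eq_mul_of_absNorm_eq_sq {J : Ideal S} {p : ℕ} (hp : p.Prime)
    (hJ : absNorm J = p ^ 2) :
    J.IsPrime ∨ ∃ P Q : Ideal S, absNorm P = p ∧ absNorm Q = p ∧ J = P * Q := by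
  refine or_iff_not_imp_left.mpr fun hJprime => ?_
  have hJtop : J ≠ ⊤ := by
    rintro rfl
    exact (Nat.one_lt_pow two_ne_zero hp.one_lt).ne (absNorm_top.symm.trans hJ)
  obtain ⟨M, hM, hJM⟩ := exists_le_maximal J hJtop
  obtain ⟨Q, rfl⟩ := dvd_iff_le.mpr hJM
  have hQtop : Q ≠ ⊤ := by
    rintro rfl
    exact hJprime (by simpa using hM.isPrime)
  rw [map_mul, hp.mul_eq_prime_sq_iff (by simpa using hM.ne_top) (by simpa using hQtop)] at hJ
  exact ⟨M, Q, hJ.1, hJ.2, rfl⟩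

theorem mul_sup_span_natCast_eq {A B : Ideal S} {m n : ℕ} (hmn : m.Coprime n)
    (hA : absNorm A = m) (hB : absNorm B = n) : A * B ⊔ span {(m : S)} = A :=
  mul_sup_span_singleton_eq hmn.cast (hA ▸ absNorm_mem A) (hB ▸ absNorm_mem B)

variable [Module.Finite ℤ S]

variable (S)

noncomputable def absNormCount : ArithmeticFunction ℕ where
  toFun N := Nat.card {I : Ideal S // I ≠ ⊥ ∧ absNorm I = N}
  map_zero' := Nat.card_eq_zero.mpr (.inl ⟨fun I => I.2.1 (absNorm_eq_zero_iff.mp I.2.2)⟩)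

variable {S}

theorem absNormCount_apply (N : ℕ) :
    absNormCount S N = Nat.card {I : Ideal S // I ≠ ⊥ ∧ absNorm I = N} := by
  rfl

theorem absNorm_sup_span_natCast_dvd {I : Ideal S} {m n : ℕ} (hmn : m.Coprime n)
    (hI : absNorm I = m * n) : absNorm (I ⊔ span {(m : S)}) ∣ m := by
  have hdvd_pow : absNorm (I ⊔ span {(m : S)}) ∣ m ^ Module.finrank ℤ S :=
    absNorm_span_natCast (S := S) m ▸ absNorm_dvd_absNorm_of_le le_sup_right
  exact (Nat.Coprime.coprime_dvd_left hdvd_pow (hmn.pow_left _)).dvd_of_dvd_mul_right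
    (hI ▸ absNorm_dvd_absNorm_of_le le_sup_left)

theorem absNorm_sup_span_natCast {I : Ideal S} {m n : ℕ} (hmn : m.Coprime n)
    (hI : absNorm I = m * n) (hI0 : I ≠ ⊥) : absNorm (I ⊔ span {(m : S)}) = m := by
  have hmem : ((m * n : ℕ) : S) ∈ I := hI ▸ absNorm_mem I
  have hprod : absNorm (I ⊔ span {(m : S)}) * absNorm (I ⊔ span {(n : S)}) = m * n := by
    rw [← map_mul, sup_span_singleton_mul_sup_span_singleton hmn.cast (by exact_mod_cast hmem),
      hI]
  obtain ⟨hm0, hn0⟩ : m ≠ 0 ∧ n ≠ 0 :=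
    mul_ne_zero_iff.mp fun h => hI0 (absNorm_eq_zero_iff.mp (hI.trans h))
  have hm := Nat.le_of_dvd (Nat.pos_of_ne_zero hm0) (absNorm_sup_span_natCast_dvd hmn hI)
  have hn := Nat.le_of_dvd (Nat.pos_of_ne_zero hn0)
    (absNorm_sup_span_natCast_dvd hmn.symm (hI.trans (mul_comm m n)))
  exact le_antisymm hm (not_lt.mp fun hlt =>
    (Nat.mul_lt_mul_of_lt_of_le hlt hn (Nat.pos_of_ne_zero hn0)).ne hprod)

theorem absNormCount_mul {m n : ℕ} (hmn : m.Coprime n) :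
    absNormCount S (m * n) = absNormCount S m * absNormCount S n := by
  rw [absNormCount_apply, absNormCount_apply, absNormCount_apply, ← Nat.card_prod]
  symm
  refine Nat.card_eq_of_bijective (fun AB => ⟨AB.1.1 * AB.2.1,
    mul_ne_zero AB.1.2.1 AB.2.2.1, by rw [map_mul, AB.1.2.2, AB.2.2.2]⟩) ⟨?_, ?_⟩
  · rintro ⟨⟨A, _, hA⟩, ⟨B, _, hB⟩⟩ ⟨⟨A', _, hA'⟩, ⟨B', _, hB'⟩⟩ hAB
    simp only [Subtype.mk.injEq] at hAB
    refine Prod.ext (Subtype.ext ?_) (Subtype.ext ?_)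
    · show A = A'
      rw [← mul_sup_span_natCast_eq hmn hA hB, hAB, mul_sup_span_natCast_eq hmn hA' hB']
    · show B = B'
      rw [← mul_sup_span_natCast_eq hmn.symm hB hA, mul_comm, hAB, mul_comm,
        mul_sup_span_natCast_eq hmn.symm hB' hA']
  · rintro ⟨I, hI0, hI⟩
    have hmem : ((m : S) * n) ∈ I := by exact_mod_cast hI ▸ absNorm_mem I
    have hI' : absNorm I = n * m := hI.trans (mul_comm m n)
    refine ⟨(⟨I ⊔ span {(m : S)}, ?_, absNorm_sup_span_natCast hmn hI hI0⟩,
      ⟨I ⊔ span {(n : S)}, ?_, absNorm_sup_span_natCast hmn.symm hI' hI0⟩),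
      Subtype.ext (sup_span_singleton_mul_sup_span_singleton hmn.cast hmem)⟩ <;>
    exact ne_bot_of_le_ne_bot hI0 le_sup_left

theorem isMultiplicative_absNormCount : (absNormCount S).IsMultiplicative := by
  refine ⟨?_, absNormCount_mul⟩
  rw [absNormCount_apply, Nat.card_eq_one_iff_exists]
  exact ⟨⟨⊤, top_ne_bot, absNorm_top⟩,
    fun ⟨I, _, hI⟩ => Subtype.ext (absNorm_eq_one_iff.mp hI)⟩

theorem absNormCount_prime_pow_of_span_eq_pow {p r f : ℕ} (hp : p.Prime) {P : Ideal S}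
    (hP : P.IsPrime) (hspan : span {(p : S)} = P ^ r) (hPnorm : absNorm P = p ^ f) (e : ℕ) :
    absNormCount S (p ^ e) = if f ∣ e then 1 else 0 := by
  have hP0 : P ≠ ⊥ := by
    rintro rfl
    simp [hp.ne_zero, eq_comm] at hPnorm
  have hPprime : Prime P := prime_of_isPrime hP0 hP
  have hf : f ≠ 0 := by
    rintro rfl
    exact hP.ne_top (absNorm_eq_one_iff.mp (hPnorm.trans (pow_zero p)))
  have hpow_inj : Function.Injective (p ^ ·) := Nat.pow_right_injective hp.two_le
  have hclassify (I : Ideal S) (hI : absNorm I = p ^ e) : ∃ i, I = P ^ i ∧ f * i = e := by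
    have hdvd := dvd_span_natCast_pow_of_absNorm_eq hI
    rw [hspan, ← pow_mul] at hdvd
    obtain ⟨i, -, hIi⟩ := (dvd_prime_pow hPprime _).mp hdvd
    rw [associated_iff_eq] at hIi
    refine ⟨i, hIi, hpow_inj ?_⟩
    simp only [pow_mul, ← hPnorm, ← map_pow, ← hIi, hI]
  rw [absNormCount_apply]
  split_ifs with hfe
  · obtain ⟨k, rfl⟩ := hfe
    refine Nat.card_eq_one_iff_exists.mpr
      ⟨⟨P ^ k, pow_ne_zero k hP0, by rw [map_pow, hPnorm, pow_mul]⟩, ?_⟩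
    rintro ⟨I, _, hI⟩
    obtain ⟨i, rfl, hik⟩ := hclassify I hI
    exact Subtype.ext (congrArg (P ^ ·) (Nat.eq_of_mul_eq_mul_left (Nat.pos_of_ne_zero hf) hik))
  · refine Nat.card_eq_zero.mpr (.inl ⟨fun ⟨I, _, hI⟩ => hfe ?_⟩)
    obtain ⟨i, -, hi⟩ := hclassify I hI
    exact Dvd.intro i hi

theorem absNormCount_prime_pow_of_span_eq_mul {p : ℕ} (hp : p.Prime) {P Q : Ideal S}
    (hPQ : P ≠ Q) (hspan : span {(p : S)} = P * Q) (hPnorm : absNorm P = p)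
    (hQnorm : absNorm Q = p) (e : ℕ) : absNormCount S (p ^ e) = e + 1 := by
  have hP : Prime P := prime_of_absNorm_eq_prime hp hPnorm
  have hQ : Prime Q := prime_of_absNorm_eq_prime hp hQnorm
  have hnorm (i j : ℕ) : absNorm (P ^ i * Q ^ j) = p ^ (i + j) := by
    rw [map_mul, map_pow, map_pow, hPnorm, hQnorm, pow_add]
  have hle {i j i' j' : ℕ} (h : P ^ i * Q ^ j = P ^ i' * Q ^ j') : i ≤ i' := by
    have hPQ' : ¬ P ∣ Q ^ j' := fun hdvd =>
      hPQ (associated_iff_eq.mp (hP.associated_of_dvd hQ (hP.dvd_of_dvd_pow hdvd)))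
    exact (pow_dvd_pow_iff hP.ne_zero hP.not_isUnit).mp
      (hP.pow_dvd_of_dvd_mul_right i hPQ' (h ▸ dvd_mul_right _ _))
  rw [absNormCount_apply, ← Nat.card_antidiagonal e, ← Nat.card_eq_finsetCard]
  symm
  refine Nat.card_eq_of_bijective (fun ij => ⟨P ^ ij.1.1 * Q ^ ij.1.2,
    mul_ne_zero (pow_ne_zero _ hP.ne_zero) (pow_ne_zero _ hQ.ne_zero),
    by rw [hnorm, HasAntidiagonal.mem_antidiagonal.mp ij.2]⟩) ⟨?_, ?_⟩
  · rintro ⟨⟨i, j⟩, hij⟩ ⟨⟨i', j'⟩, hij'⟩ h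
    have h : P ^ i * Q ^ j = P ^ i' * Q ^ j' := congrArg Subtype.val h
    have hii' : i = i' := le_antisymm (hle h) (hle h.symm)
    rw [HasAntidiagonal.mem_antidiagonal] at hij hij'
    exact Subtype.ext (Prod.ext hii' (show j = j' by omega))
  · rintro ⟨I, _, hI⟩
    have hdvd := dvd_span_natCast_pow_of_absNorm_eq hI
    rw [hspan, mul_pow] at hdvd
    obtain ⟨A, B, hA, hB, rfl⟩ := exists_dvd_and_dvd_of_dvd_mul hdvd
    obtain ⟨i, -, hAi⟩ := (dvd_prime_pow hP _).mp hA
    obtain ⟨j, -, hBj⟩ := (dvd_prime_pow hQ _).mp hB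
    rw [associated_iff_eq] at hAi hBj
    subst hAi hBj
    have hij : i + j = e := Nat.pow_right_injective hp.two_le ((hnorm i j).symm.trans hI)
    exact ⟨⟨(i, j), HasAntidiagonal.mem_antidiagonal.mpr hij⟩, rfl⟩

end Ideal

theorem ideal_count_eq_divisor_sum_general
    (Δ : ℤ) (hΔneg : Δ < 0)
    (K : Type*) [Field K] [NumberField K]
    (α : K) (hα : α ^ 2 = (Δ : K)) (hgen : Algebra.adjoin ℚ {α} = ⊤)
    (χ : ℕ → ℤ) (hχ1 : χ 1 = 1) (hχmul : ∀ m n : ℕ, χ (m * n) = χ m * χ n)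
    (hsplit : ∀ p : ℕ, p.Prime →
      (∃ P Q : Ideal (𝓞 K), P.IsPrime ∧ Q.IsPrime ∧ P ≠ Q ∧
        Ideal.span {(p : 𝓞 K)} = P * Q) → χ p = 1)
    (hram : ∀ p : ℕ, p.Prime →
      (∃ P : Ideal (𝓞 K), P.IsPrime ∧ Ideal.span {(p : 𝓞 K)} = P ^ 2) → χ p = 0)
    (hinert : ∀ p : ℕ, p.Prime →
      (Ideal.span {(p : 𝓞 K)}).IsPrime → χ p = -1) :
    ∀ N : ℕ, 1 ≤ N →
      (Nat.card {I : Ideal (𝓞 K) // I ≠ ⊥ ∧ Ideal.absNorm I = N} : ℤ)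
        = ∑ a ∈ N.divisors, χ a := by
  have hrank : Module.finrank ℤ (𝓞 K) = 2 := by
    have hΔ : ∀ b : ℚ, b ^ 2 ≠ Δ := fun b hb => by
      have : (Δ : ℚ) < 0 := by exact_mod_cast hΔneg
      nlinarith [sq_nonneg b]
    rw [RingOfIntegers.rank]
    exact finrank_eq_two_of_sq_eq hΔ (by simpa using hα) hgen
  intro N _
  rw [← absNormCount_apply, ← natCoe_apply]
  refine isMultiplicative_absNormCount.natCast.eq_sum_divisors_of_prime_pow
    ⟨⟨χ, hχ1⟩, hχmul⟩ (fun p e hp => ?_) N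
  rw [natCoe_apply]
  have hnorm : absNorm (span {(p : 𝓞 K)}) = p ^ 2 := hrank ▸ absNorm_span_natCast p
  rcases isPrime_or_exists_eq_mul_of_absNorm_eq_sq hp hnorm with hprime | ⟨P, Q, hP, hQ, hspan⟩
  · rw [absNormCount_prime_pow_of_span_eq_pow hp hprime (pow_one _).symm hnorm]
    simp [hinert p hp hprime, neg_one_geom_sum, Nat.even_add_one, ← even_iff_two_dvd, apply_ite]
  have hPprime := isPrime_of_prime (prime_of_absNorm_eq_prime hp hP)
  obtain rfl | hPQ := eq_or_ne P Q
  · rw [← sq] at hspan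
    rw [absNormCount_prime_pow_of_span_eq_pow hp hPprime hspan (hP.trans (pow_one p).symm)]
    simp [hram p hp ⟨P, hPprime, hspan⟩]
  · have hQprime := isPrime_of_prime (prime_of_absNorm_eq_prime hp hQ)
    rw [absNormCount_prime_pow_of_span_eq_mul hp hPQ hspan hP hQ]
    simp [hsplit p hp ⟨P, Q, hPprime, hQprime, hPQ, hspan⟩]

/-- For an imaginary quadratic field `k = ℚ(√Δ)` (`Δ < 0` squarefree) and a completely
multiplicative `χ : ℕ → ℤ` taking the value `1` at split primes, `0` at ramified primes
and `-1` at inert primes, the number of nonzero ideals of `O_k` of absolute norm `N`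
equals `∑_{a ∣ N} χ(a)`. -/
theorem ideal_count_eq_divisor_sum
    (Δ : ℤ) (hΔneg : Δ < 0) (hΔsq : Squarefree Δ)
    (K : Type*) [Field K] [NumberField K]
    (α : K) (hα : α ^ 2 = (Δ : K)) (hgen : Algebra.adjoin ℚ {α} = ⊤)
    (χ : ℕ → ℤ) (hχ1 : χ 1 = 1) (hχmul : ∀ m n : ℕ, χ (m * n) = χ m * χ n)
    (hsplit : ∀ p : ℕ, p.Prime →
      (∃ P Q : Ideal (𝓞 K), P.IsPrime ∧ Q.IsPrime ∧ P ≠ Q ∧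
        Ideal.span {(p : 𝓞 K)} = P * Q) → χ p = 1)
    (hram : ∀ p : ℕ, p.Prime →
      (∃ P : Ideal (𝓞 K), P.IsPrime ∧ Ideal.span {(p : 𝓞 K)} = P ^ 2) → χ p = 0)
    (hinert : ∀ p : ℕ, p.Prime →
      (Ideal.span {(p : 𝓞 K)}).IsPrime → χ p = -1) :
    ∀ N : ℕ, 1 ≤ N →
      (Nat.card {I : Ideal (𝓞 K) // I ≠ ⊥ ∧ Ideal.absNorm I = N} : ℤ)
        = ∑ a ∈ N.divisors, χ a :=
  ideal_count_eq_divisor_sum_general Δ hΔneg K α hα hgen χ hχ1 hχmul hsplit hram hinert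
end

section
/- Let ξ₁, ξ₂ ∈ ℂ and set q := |ξ₁|² − |ξ₂|². For Z ∈ ℂ with |Z| < 1 define R(Z) := 2·|Z·ξ₁ − ξ₂|²/(1 − |Z|²) and G(Z) := ∫_1^∞ exp(−2π·R(Z)·t)/t dt. Then at every point Z = x + i·y with |Z| < 1 and Z·ξ₁ ≠ ξ₂, the function G (viewed as a function of the two real variables x, y) is twice continuously differentiable and its Euclidean Laplacian satisfies (∂²G/∂x² + ∂²G/∂y²)(Z) = (8π·(R(Z) + 2q) − 4)·exp(−2π·R(Z))/(1 − |Z|²)². -/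
/-!
For `r > 0` the substitution `s = r t` gives `greenProfile r = ∫_r^∞ e^{-2πs} ds/s`, so
`G = greenProfile ∘ R` with `greenProfile' r = -e^{-2πr}/r`. Hence along every line
`(greenProfile ∘ R)'' = e^{-2πR} (2πR (log R)'² - (log R)'')`. On the line `Z + s u` with `|u| = 1`,
`R = 2N/D` is a ratio of quadratics in `s`, where `N = |Zξ₁ - ξ₂|²` and `D = 1 - |Z|²`.
Summing over `u = 1, i`: `log N` is harmonic, `Δ log D = -4/D²` and
`|∇ log R|² = 4/D² + 4q/(ND)`, which gives the formula.
-/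

open MeasureTheory Real

/-- The majorant `R(Z) = 2|Zξ₁ - ξ₂|²/(1 - |Z|²)` on the unit disc. -/
noncomputable def Rmaj (ξ₁ ξ₂ : ℂ) (Z : ℂ) : ℝ :=
  2 * ‖Z * ξ₁ - ξ₂‖ ^ 2 / (1 - ‖Z‖ ^ 2)

/-- The GreenFn function `G(Z) = ∫_1^∞ e^{-2π R(Z) t}/t dt`. -/
noncomputable def GreenFn (ξ₁ ξ₂ : ℂ) (Z : ℂ) : ℝ :=
  ∫ t in Set.Ioi (1 : ℝ), Real.exp (-2 * π * Rmaj ξ₁ ξ₂ Z * t) / t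

open Set Filter Topology
open scoped ContDiff InnerProductSpace

theorem iteratedDeriv_two_eq_of_hasDerivAt {𝕜 F : Type*} [NontriviallyNormedField 𝕜]
    [NormedAddCommGroup F] [NormedSpace 𝕜 F] {f f' : 𝕜 → F} {f'' : F} {x : 𝕜}
    (hf : ∀ᶠ t in 𝓝 x, HasDerivAt f (f' t) t) (hf' : HasDerivAt f' f'' x) :
    iteratedDeriv 2 f x = f'' := by
  rw [iteratedDeriv_succ, iteratedDeriv_one, EventuallyEq.deriv_eq (hf.mono fun t ht => ht.deriv)]
  exact hf'.deriv

theorem iteratedDeriv_eq_iteratedDeriv_comp_add_zero {𝕜 F : Type*} [NontriviallyNormedField 𝕜]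
    [NormedAddCommGroup F] [NormedSpace 𝕜 F] (n : ℕ) (f : 𝕜 → F) (x : 𝕜) :
    iteratedDeriv n f x = iteratedDeriv n (fun s => f (s + x)) 0 := by
  simp [iteratedDeriv_comp_add_const]

theorem hasDerivAt_quadratic (a₀ a₁ a₂ s : ℝ) :
    HasDerivAt (fun s => a₀ + a₁ * s + a₂ * s ^ 2) (a₁ + 2 * a₂ * s) s :=
  (((hasDerivAt_id s).const_mul a₁).const_add a₀ |>.add
    ((hasDerivAt_pow 2 s).const_mul a₂)).congr_deriv (by norm_num; ring)

section QuadraticRatio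

variable (n₀ n₁ n₂ d₀ d₁ d₂ : ℝ)

theorem hasDerivAt_quadratic_div {s : ℝ} (hs : d₀ + d₁ * s + d₂ * s ^ 2 ≠ 0) :
    HasDerivAt (fun s => (n₀ + n₁ * s + n₂ * s ^ 2) / (d₀ + d₁ * s + d₂ * s ^ 2))
      (((n₁ + 2 * n₂ * s) * (d₀ + d₁ * s + d₂ * s ^ 2)
        - (n₀ + n₁ * s + n₂ * s ^ 2) * (d₁ + 2 * d₂ * s)) / (d₀ + d₁ * s + d₂ * s ^ 2) ^ 2) s :=
  (hasDerivAt_quadratic n₀ n₁ n₂ s).div (hasDerivAt_quadratic d₀ d₁ d₂ s) hs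

variable {d₀}

theorem deriv_quadratic_div_zero (hd : d₀ ≠ 0) :
    deriv (fun s => (n₀ + n₁ * s + n₂ * s ^ 2) / (d₀ + d₁ * s + d₂ * s ^ 2)) 0
      = (n₁ * d₀ - n₀ * d₁) / d₀ ^ 2 := by
  rw [(hasDerivAt_quadratic_div n₀ n₁ n₂ d₀ d₁ d₂ (by simpa using hd)).deriv]
  simp

theorem iteratedDeriv_two_quadratic_div_zero (hd : d₀ ≠ 0) :
    iteratedDeriv 2 (fun s => (n₀ + n₁ * s + n₂ * s ^ 2) / (d₀ + d₁ * s + d₂ * s ^ 2)) 0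
      = 2 * (n₂ * d₀ ^ 2 - n₁ * d₀ * d₁ - n₀ * d₀ * d₂ + n₀ * d₁ ^ 2) / d₀ ^ 3 := by
  have hnum := hasDerivAt_quadratic n₀ n₁ n₂ 0
  have hden := hasDerivAt_quadratic d₀ d₁ d₂ 0
  have hden0 : d₀ + d₁ * 0 + d₂ * 0 ^ 2 ≠ 0 := by simpa using hd
  have hderiv := (((hasDerivAt_id (0 : ℝ)).const_mul (2 * n₂)).const_add n₁ |>.mul hden |>.sub
    (hnum.mul (((hasDerivAt_id (0 : ℝ)).const_mul (2 * d₂)).const_add d₁))).div (hden.pow 2)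
    (pow_ne_zero 2 hden0)
  refine iteratedDeriv_two_eq_of_hasDerivAt ?_ (hderiv.congr_deriv ?_)
  · filter_upwards [hden.continuousAt.eventually_ne hden0] with s hs
      using hasDerivAt_quadratic_div n₀ n₁ n₂ d₀ d₁ d₂ hs
  simp only [id, Pi.sub_apply, Pi.mul_apply, Pi.pow_apply]
  norm_num
  field_simp
  ring

theorem contDiffAt_quadratic_div (hd : d₀ ≠ 0) {n : WithTop ℕ∞} :
    ContDiffAt ℝ n (fun s => (n₀ + n₁ * s + n₂ * s ^ 2) / (d₀ + d₁ * s + d₂ * s ^ 2)) 0 :=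
  ContDiffAt.div (by fun_prop) (by fun_prop) (by simpa using hd)

end QuadraticRatio

noncomputable def greenProfile (r : ℝ) : ℝ :=
  ∫ t in Ioi (1 : ℝ), exp (-2 * π * r * t) / t

theorem greenFn_eq_greenProfile (ξ₁ ξ₂ Z : ℂ) : GreenFn ξ₁ ξ₂ Z = greenProfile (Rmaj ξ₁ ξ₂ Z) :=
  rfl

theorem integrableOn_exp_neg_mul_div_Ioi {b c : ℝ} (hb : 0 < b) (hc : 0 < c) :
    IntegrableOn (fun s => exp (-b * s) / s) (Ioi c) := by
  refine ((exp_neg_integrableOn_Ioi c hb).const_mul c⁻¹).mono' ?_ ?_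
  · exact (ContinuousOn.div (by fun_prop) continuousOn_id fun s hs => (hc.trans hs).ne')
      |>.aestronglyMeasurable measurableSet_Ioi
  · refine (ae_restrict_iff' measurableSet_Ioi).2 (Eventually.of_forall fun s hs => ?_)
    have hs0 : 0 < s := hc.trans hs
    rw [norm_div, Real.norm_of_nonneg (exp_pos _).le, Real.norm_of_nonneg hs0.le, div_eq_inv_mul]
    gcongr
    exact hs.le

theorem greenProfile_eq_integral_Ioi {r : ℝ} (hr : 0 < r) :
    greenProfile r = ∫ s in Ioi r, exp (-2 * π * s) / s := by
  have h := integral_comp_mul_left_Ioi (fun s => exp (-2 * π * s) / s) 1 hr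
  rw [mul_one, smul_eq_mul] at h
  rw [← mul_inv_cancel_left₀ hr.ne' (∫ s in Ioi r, _), ← h, ← integral_const_mul]
  refine setIntegral_congr_fun measurableSet_Ioi fun t ht => ?_
  have ht0 : t ≠ 0 := (zero_lt_one.trans ht).ne'
  field_simp

theorem greenProfile_eq_sub_intervalIntegral {r : ℝ} (hr : 0 < r) :
    greenProfile r = greenProfile 1 - ∫ s in (1 : ℝ)..r, exp (-2 * π * s) / s := by
  have hint : ∀ {c : ℝ}, 0 < c → IntegrableOn (fun s => exp (-2 * π * s) / s) (Ioi c) :=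
    fun hc => by simpa only [neg_mul] using integrableOn_exp_neg_mul_div_Ioi two_pi_pos hc
  rw [greenProfile_eq_integral_Ioi hr, greenProfile_eq_integral_Ioi one_pos,
    ← intervalIntegral.integral_Ioi_sub_Ioi' (hint one_pos) (hint hr), sub_sub_cancel]

theorem hasDerivAt_greenProfile {r : ℝ} (hr : 0 < r) :
    HasDerivAt greenProfile (-(exp (-2 * π * r) / r)) r := by
  have hcont : ContinuousOn (fun s => exp (-2 * π * s) / s) (Ioi 0) :=
    ContinuousOn.div (by fun_prop) continuousOn_id fun s hs => ne_of_gt hs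
  have hint : IntervalIntegrable (fun s => exp (-2 * π * s) / s) volume 1 r :=
    (hcont.mono fun s hs => (lt_min one_pos hr).trans_le hs.1).intervalIntegrable
  have hFTC := intervalIntegral.integral_hasDerivAt_right hint
    (hcont.stronglyMeasurableAtFilter isOpen_Ioi r hr) (hcont.continuousAt (Ioi_mem_nhds hr))
  refine (hFTC.const_sub (greenProfile 1)).congr_of_eventuallyEq ?_
  filter_upwards [Ioi_mem_nhds hr] with s hs using greenProfile_eq_sub_intervalIntegral hs

theorem deriv_greenProfile {r : ℝ} (hr : 0 < r) :
    deriv greenProfile r = -(exp (-2 * π * r) / r) :=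
  (hasDerivAt_greenProfile hr).deriv

theorem contDiffOn_greenProfile : ContDiffOn ℝ ∞ greenProfile (Ioi 0) := by
  rw [contDiffOn_infty_iff_deriv_of_isOpen isOpen_Ioi]
  refine ⟨fun r hr => (hasDerivAt_greenProfile hr).differentiableAt.differentiableWithinAt, ?_⟩
  refine ContDiffOn.congr ?_ fun r hr => deriv_greenProfile hr
  exact (ContDiffOn.div (by fun_prop) contDiffOn_id fun s hs => ne_of_gt hs).neg

theorem contDiffAt_greenProfile {r : ℝ} (hr : 0 < r) : ContDiffAt ℝ 2 greenProfile r :=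
  (contDiffOn_greenProfile.contDiffAt (Ioi_mem_nhds hr)).of_le ENat.LEInfty.out

theorem iteratedDeriv_two_greenProfile {r : ℝ} (hr : 0 < r) :
    iteratedDeriv 2 greenProfile r = exp (-2 * π * r) * (2 * π * r + 1) / r ^ 2 := by
  have h := (((hasDerivAt_id r).const_mul (-2 * π)).exp.div (hasDerivAt_id r) hr.ne').neg
  refine iteratedDeriv_two_eq_of_hasDerivAt ?_ (h.congr_deriv ?_)
  · filter_upwards [Ioi_mem_nhds hr] with s hs using hasDerivAt_greenProfile hs
  · simp only [id]
    field_simp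
    ring

theorem iteratedDeriv_two_greenProfile_comp_quadratic_div {n₀ d₀ : ℝ} (n₁ n₂ d₁ d₂ : ℝ)
    (hn : 0 < n₀) (hd : 0 < d₀) :
    iteratedDeriv 2
        (fun s => greenProfile ((n₀ + n₁ * s + n₂ * s ^ 2) / (d₀ + d₁ * s + d₂ * s ^ 2))) 0
      = exp (-2 * π * (n₀ / d₀)) * (2 * π * (n₀ / d₀) * (n₁ / n₀ - d₁ / d₀) ^ 2
          - (2 * n₂ / n₀ - (n₁ / n₀) ^ 2 - 2 * d₂ / d₀ + (d₁ / d₀) ^ 2)) := by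
  have hr : 0 < n₀ / d₀ := div_pos hn hd
  have hρ0 : (n₀ + n₁ * 0 + n₂ * 0 ^ 2) / (d₀ + d₁ * 0 + d₂ * 0 ^ 2) = n₀ / d₀ := by simp
  rw [← Function.comp_def, iteratedDeriv_comp_two, hρ0, iteratedDeriv_two_greenProfile hr,
    deriv_greenProfile hr, deriv_quadratic_div_zero _ _ _ _ _ hd.ne',
    iteratedDeriv_two_quadratic_div_zero _ _ _ _ _ hd.ne']
  · field_simp
    ring
  · rw [hρ0]
    exact contDiffAt_greenProfile hr
  · exact contDiffAt_quadratic_div _ _ _ _ _ hd.ne'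

theorem Complex.inner_sq_add_inner_I_mul_sq (w ξ : ℂ) :
    ⟪w, ξ⟫_ℝ ^ 2 + ⟪w, Complex.I * ξ⟫_ℝ ^ 2 = ‖w‖ ^ 2 * ‖ξ‖ ^ 2 := by
  simp only [Complex.inner, Complex.sq_norm, Complex.normSq_apply, Complex.mul_re, Complex.mul_im,
    Complex.conj_re, Complex.conj_im, Complex.I_re, Complex.I_im]
  ring

theorem Complex.inner_mul_inner_one_add_inner_I_mul_mul_inner_I (w ξ Z : ℂ) :
    ⟪w, ξ⟫_ℝ * ⟪Z, 1⟫_ℝ + ⟪w, Complex.I * ξ⟫_ℝ * ⟪Z, Complex.I⟫_ℝ = ⟪w, Z * ξ⟫_ℝ := by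
  simp only [Complex.inner, Complex.mul_re, Complex.mul_im, Complex.conj_re, Complex.conj_im,
    Complex.I_re, Complex.I_im, Complex.one_re, Complex.one_im]
  ring

section Disc

variable (ξ₁ ξ₂ : ℂ) {Z : ℂ}

theorem Rmaj_pos (hZ : ‖Z‖ < 1) (hw : Z * ξ₁ ≠ ξ₂) : 0 < Rmaj ξ₁ ξ₂ Z := by
  have : 0 < ‖Z * ξ₁ - ξ₂‖ := norm_pos_iff.2 (sub_ne_zero.2 hw)
  unfold Rmaj
  have : ‖Z‖ ^ 2 < 1 := by nlinarith [norm_nonneg Z]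
  positivity

theorem contDiffAt_Rmaj {n : WithTop ℕ∞} (hZ : ‖Z‖ ≠ 1) : ContDiffAt ℝ n (Rmaj ξ₁ ξ₂) Z := by
  have hsq : ContDiff ℝ n fun Z : ℂ => ‖Z‖ ^ 2 := contDiff_norm_sq ℝ
  refine ContDiffAt.div ?_ (contDiffAt_const.sub hsq.contDiffAt) ?_
  · exact contDiffAt_const.mul
      (hsq.comp ((contDiff_id.mul contDiff_const).sub contDiff_const)).contDiffAt
  · rwa [sub_ne_zero, ne_comm, Ne, pow_eq_one_iff_of_nonneg (norm_nonneg Z) two_ne_zero]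

theorem Rmaj_add_mul {u : ℂ} (hu : ‖u‖ = 1) (s : ℝ) :
    Rmaj ξ₁ ξ₂ (Z + s * u)
      = (2 * ‖Z * ξ₁ - ξ₂‖ ^ 2 + 4 * ⟪Z * ξ₁ - ξ₂, u * ξ₁⟫_ℝ * s + 2 * ‖ξ₁‖ ^ 2 * s ^ 2)
        / (1 - ‖Z‖ ^ 2 + -2 * ⟪Z, u⟫_ℝ * s + -1 * s ^ 2) := by
  have hline : (Z + s * u) * ξ₁ - ξ₂ = (Z * ξ₁ - ξ₂) + s • (u * ξ₁) := by
    rw [Complex.real_smul]; ring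
  rw [Rmaj, hline, ← Complex.real_smul, norm_add_sq_real, norm_add_sq_real, inner_smul_right,
    inner_smul_right, norm_smul, norm_smul, norm_mul, hu, Real.norm_eq_abs]
  ring_nf
  simp

theorem laplacian_greenFn_eq (hZ : ‖Z‖ < 1) (hw : Z * ξ₁ ≠ ξ₂) :
    iteratedDeriv 2 (fun s : ℝ => GreenFn ξ₁ ξ₂ (Z + s * 1)) 0
      + iteratedDeriv 2 (fun s : ℝ => GreenFn ξ₁ ξ₂ (Z + s * Complex.I)) 0
      = (8 * π * (Rmaj ξ₁ ξ₂ Z + 2 * (‖ξ₁‖ ^ 2 - ‖ξ₂‖ ^ 2)) - 4) * exp (-2 * π * Rmaj ξ₁ ξ₂ Z)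
          / (1 - ‖Z‖ ^ 2) ^ 2 := by
  have hN : 0 < ‖Z * ξ₁ - ξ₂‖ ^ 2 := by
    have := norm_pos_iff.2 (sub_ne_zero.2 hw)
    positivity
  have hD : 0 < 1 - ‖Z‖ ^ 2 := by nlinarith [norm_nonneg Z]
  simp only [greenFn_eq_greenProfile, Rmaj_add_mul ξ₁ ξ₂ norm_one,
    Rmaj_add_mul ξ₁ ξ₂ Complex.norm_I]
  rw [iteratedDeriv_two_greenProfile_comp_quadratic_div _ _ _ _ (by positivity) hD,
    iteratedDeriv_two_greenProfile_comp_quadratic_div _ _ _ _ (by positivity) hD, one_mul]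
  have hw_sq := Complex.inner_sq_add_inner_I_mul_sq (Z * ξ₁ - ξ₂) ξ₁
  have hZ_sq := Complex.inner_sq_add_inner_I_mul_sq Z 1
  have hcross := Complex.inner_mul_inner_one_add_inner_I_mul_mul_inner_I (Z * ξ₁ - ξ₂) ξ₁ Z
  have hpol := norm_sub_sq_real (Z * ξ₁) (Z * ξ₁ - ξ₂)
  rw [mul_one, norm_one, one_pow, mul_one] at hZ_sq
  rw [sub_sub_cancel, norm_mul, mul_pow, real_inner_comm] at hpol
  unfold Rmaj
  set N := ‖Z * ξ₁ - ξ₂‖ ^ 2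
  set D := 1 - ‖Z‖ ^ 2
  set E := exp (-2 * π * (2 * N / D))
  rw [show ‖Z‖ ^ 2 = 1 - D by simp [D]] at hZ_sq hpol
  -- The sum over `u ∈ {1, I}` depends on `⟪Z * ξ₁ - ξ₂, u * ξ₁⟫` and `⟪Z, u⟫` only through the
  -- three sums evaluated by `hw_sq`, `hcross` (with `hpol`) and `hZ_sq`.
  linear_combination (norm := skip) E * (8 * π * (2 * N / D) + 4) / N ^ 2 * hw_sq
    + E * 8 * π * (2 * N / D) / (N * D) * (2 * hcross + hpol)
    + E * (8 * π * (2 * N / D) - 4) / D ^ 2 * hZ_sq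
  field_simp
  ring

end Disc

/-- Equation (ddcGrPhiEqn): away from the singularity, the GreenFn function is `C²`
(as a function of the two real variables) and its Euclidean Laplacian equals
`(8π(R + 2q) - 4)·e^{-2πR}/(1 - |Z|²)²`, where `q = |ξ₁|² - |ξ₂|²`. -/
theorem laplacian_Green (ξ₁ ξ₂ : ℂ) (x y : ℝ)
    (hZ : ‖(x : ℂ) + (y : ℂ) * Complex.I‖ < 1)
    (hne : ((x : ℂ) + (y : ℂ) * Complex.I) * ξ₁ ≠ ξ₂) :
    ContDiffAt ℝ 2 (fun p : ℝ × ℝ => GreenFn ξ₁ ξ₂ ((p.1 : ℂ) + (p.2 : ℂ) * Complex.I)) (x, y) ∧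
    iteratedDeriv 2 (fun x' : ℝ => GreenFn ξ₁ ξ₂ ((x' : ℂ) + (y : ℂ) * Complex.I)) x
      + iteratedDeriv 2 (fun y' : ℝ => GreenFn ξ₁ ξ₂ ((x : ℂ) + (y' : ℂ) * Complex.I)) y
      = (8 * π * (Rmaj ξ₁ ξ₂ ((x : ℂ) + (y : ℂ) * Complex.I)
            + 2 * (‖ξ₁‖ ^ 2 - ‖ξ₂‖ ^ 2)) - 4)
          * Real.exp (-2 * π * Rmaj ξ₁ ξ₂ ((x : ℂ) + (y : ℂ) * Complex.I))
          / (1 - ‖(x : ℂ) + (y : ℂ) * Complex.I‖ ^ 2) ^ 2 := by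
  set Z : ℂ := x + y * Complex.I with hZdef
  constructor
  · have hcoord : ContDiff ℝ 2 fun p : ℝ × ℝ => (p.1 : ℂ) + p.2 * Complex.I :=
      (Complex.ofRealCLM.contDiff.comp contDiff_fst).add
        ((Complex.ofRealCLM.contDiff.comp contDiff_snd).mul contDiff_const)
    change ContDiffAt ℝ 2
      (greenProfile ∘ Rmaj ξ₁ ξ₂ ∘ fun p : ℝ × ℝ => p.1 + p.2 * Complex.I) (x, y)
    exact (contDiffAt_greenProfile (Rmaj_pos ξ₁ ξ₂ hZ hne)).comp (x, y)
      ((contDiffAt_Rmaj ξ₁ ξ₂ hZ.ne).comp (x, y) hcoord.contDiffAt)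
  · have hre : (fun s : ℝ => GreenFn ξ₁ ξ₂ (↑(s + x) + y * Complex.I))
        = fun s : ℝ => GreenFn ξ₁ ξ₂ (Z + s * 1) := by
      funext s; rw [hZdef]; push_cast; ring_nf
    have him : (fun s : ℝ => GreenFn ξ₁ ξ₂ (x + ↑(s + y) * Complex.I))
        = fun s : ℝ => GreenFn ξ₁ ξ₂ (Z + s * Complex.I) := by
      funext s; rw [hZdef]; push_cast; ring_nf
    rw [iteratedDeriv_eq_iteratedDeriv_comp_add_zero _ _ x,
      iteratedDeriv_eq_iteratedDeriv_comp_add_zero _ _ y, hre, him]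
    exact laplacian_greenFn_eq ξ₁ ξ₂ hZ hne
end
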